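/- The map (π, ξ0) ↦ f_π(ξ0) is jointly continuous on Π0 × Ξ0. -/

import Mathlib

open Filter Topology MeasureTheory
open scoped Classical

namespace OfflineRL

variable (S A : Type*) [Fintype S] [Fintype A] [DecidableEq S] [DecidableEq A]

/-- Stationary policies `Π`. -/
def policySet : Set (S → A → ℝ) :=
  {π | ∀ s, (∀ a, 0 ≤ π s a) ∧ ∑ a, π s a = 1}

/-- Exploratory (everywhere positive) policies `Π₀`. -/
def policyPos : Set (S → A → ℝ) :=
  {π | π ∈ policySet S A ∧ ∀ s a, 0 < π s a}

/-- Policies `Π_ε`. -/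
def policyEps (ε : ℝ) : Set (S → A → ℝ) :=
  {π | π ∈ policySet S A ∧ ∀ s a, ε ≤ π s a}

/-- Transition kernels `𝒬`. -/
def kernelSet : Set (S → A → S → ℝ) :=
  {Q | ∀ s a, (∀ s', 0 ≤ Q s a s') ∧ ∑ s', Q s a s' = 1}

/-- Kernels whose associated directed graph on `S × A` is strongly connected, `𝒬₀`. -/
def kernel0 : Set (S → A → S → ℝ) :=
  {Q | Q ∈ kernelSet S A ∧
    ∀ x y : S × A, Relation.ReflTransGen (fun u v : S × A => 0 < Q u.1 u.2 v.1) x y}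

/-- Probability simplex over the states. -/
def stateSimplex : Set (S → ℝ) := {p | (∀ s, 0 ≤ p s) ∧ ∑ s, p s = 1}

/-- `Ξ`: state-action-next-state distributions with balanced marginals. -/
def XiSet : Set (S × A × S → ℝ) :=
  {ξ | (∀ z, 0 ≤ ξ z) ∧ (∑ z, ξ z = 1) ∧
    ∀ s : S, (∑ s' : S, ∑ a : A, ξ (s, a, s')) = ∑ s' : S, ∑ a : A, ξ (s', a, s)}

/-- `Ξ₀`: elements of `Ξ` with strongly connected support graph. -/
def Xi0Set : Set (S × A × S → ℝ) :=
  {ξ | ξ ∈ XiSet S A ∧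
    ∀ x y : S × A, Relation.ReflTransGen (fun u v : S × A => 0 < ξ (u.1, u.2, v.1)) x y}

/-- Stationary state-action distribution `μ(s,a) = Σ_{s'} ξ(s,a,s')`. -/
noncomputable def muXi (ξ : S × A × S → ℝ) (x : S × A) : ℝ := ∑ s', ξ (x.1, x.2, s')

/-- Transition kernel `Q(s'|s,a)` determined by `ξ`. -/
noncomputable def QXi (ξ : S × A × S → ℝ) (s : S) (a : A) (s' : S) : ℝ :=
  ξ (s, a, s') / muXi S A ξ (s, a)

/-- Behavioral policy `π(a'|s')` determined by `ξ`. -/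
noncomputable def piXi (ξ : S × A × S → ℝ) (s' : S) (a' : A) : ℝ :=
  muXi S A ξ (s', a') / ∑ a, muXi S A ξ (s', a)

/-- Transition matrix of the state-action chain of `ξ`. -/
noncomputable def Pmat (ξ : S × A × S → ℝ) (x x' : S × A) : ℝ :=
  piXi S A ξ x'.1 x'.2 * QXi S A ξ x.1 x.2 x'.1

/-- Probability of a finite state-action trajectory under `ℙ_ξ` with initial distribution `η`. -/
noncomputable def trajP (ξ : S × A × S → ℝ) (η : S → ℝ) (T : ℕ) (xs : Fin T → S × A) : ℝ :=
  ∏ t : Fin T,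
    if (t : ℕ) = 0 then η (xs t).1 * piXi S A ξ (xs t).1 (xs t).2
    else Pmat S A ξ (xs ⟨(t : ℕ) - 1, Nat.lt_of_le_of_lt (Nat.sub_le _ _) t.isLt⟩) (xs t)

/-- Empirical state-action-next-state distribution (with the ghost transition from
`(S_T, A_T)` to `S_1`, which makes it cyclic). -/
noncomputable def empXi (T : ℕ) (xs : Fin T → S × A) : S × A × S → ℝ := fun z =>
  ((Finset.univ.filter fun t : Fin T =>
      xs t = (z.1, z.2.1) ∧
      (xs ⟨((t : ℕ) + 1) % T,
        Nat.mod_lt _ (Nat.lt_of_le_of_lt (Nat.zero_le _) t.isLt)⟩).1 = z.2.2).card : ℝ) / T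

/-- `ℙ_ξ(ξ̂_T ∈ 𝒟)`. -/
noncomputable def probXi (ξ : S × A × S → ℝ) (η : S → ℝ) (𝒟 : Set (S × A × S → ℝ))
    (T : ℕ) : ℝ :=
  ∑ xs : Fin T → S × A, 𝒟.indicator (fun _ => trajP S A ξ η T xs) (empXi S A T xs)

/-- Extended-real logarithm: `elog x = log x` for `x > 0` and `⊥` otherwise. -/
noncomputable def elog (x : ℝ) : EReal := if x ≤ 0 then ⊥ else ((Real.log x : ℝ) : EReal)

/-- Marginal state distribution `μ_S(s)`. -/
noncomputable def rowXi (ξ : S × A × S → ℝ) (s : S) : ℝ := ∑ a, ∑ s', ξ (s, a, s')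

/-- Conditional relative entropy for MDPs, with the conventions `0·log(0/t) = 0` and
`t·log(t/0) = ∞` for `t > 0`. -/
noncomputable def Dmdp (ξ' ξ : S × A × S → ℝ) : EReal :=
  ∑ z : S × A × S,
    if ξ' z = 0 then (0 : EReal)
    else if ξ z = 0 then (⊤ : EReal)
    else (((ξ' z * (Real.log (ξ' z / rowXi S A ξ' z.1) -
      Real.log (ξ z / rowXi S A ξ z.1))) : ℝ) : EReal)

/-- Long-run average reward. -/
def V (r : S → A → ℝ) (ξ : S × A × S → ℝ) : ℝ := ∑ z : S × A × S, r z.1 z.2.1 * ξ z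

/-- `ξ` is the stationary state-action-next-state distribution induced by the pair
`(π, Q)` where `Q` is the kernel determined by `ξ0`. -/
def IsShift (π : S → A → ℝ) (ξ0 ξ : S × A × S → ℝ) : Prop :=
  ∃ μ : S × A → ℝ, (∀ x, 0 ≤ μ x) ∧ (∑ x, μ x = 1) ∧
    (∀ x' : S × A, μ x' = ∑ x : S × A, μ x * (π x'.1 x'.2 * QXi S A ξ0 x.1 x.2 x'.1)) ∧
    (∀ s a s', ξ (s, a, s') = QXi S A ξ0 s a s' * μ (s, a))

/-- The distributionally robust value function `V^π_ρ(ξ')`, where `f = f_π` is the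
distribution shift function of the evaluation policy. -/
noncomputable def Vrho (r : S → A → ℝ) (f : (S × A × S → ℝ) → (S × A × S → ℝ)) (ρ : ℝ)
    (ξ' : S × A × S → ℝ) : ℝ :=
  sInf ((fun ξ0 => V S A r (f ξ0)) '' {ξ0 | ξ0 ∈ Xi0Set S A ∧ Dmdp S A ξ' ξ0 ≤ (ρ : EReal)})

end OfflineRL

/-!
Once `ξ0 ∈ Ξ₀`, every state-action marginal of `ξ0` is positive, so "`ξ` is the shift of `ξ0`
under `π`" can be written as polynomial equations in `(π, ξ0, ξ)`, which cut out a closed set.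
For `(π, ξ0) ∈ Π₀ × Ξ₀` the chain on `S × A` is irreducible, so its stationary distribution, and
with it the solution `ξ`, is unique. A map into a compact set (here `Ξ`) whose graph is the
trace of a closed set is continuous.
-/

theorem continuousOn_of_isCompact_of_isClosed_graph {X Y : Type*} [TopologicalSpace X]
    [TopologicalSpace Y] {g : X → Y} {D : Set X} {K : Set Y} {C : Set (X × Y)}
    (hK : IsCompact K) (hC : IsClosed C) (hgK : Set.MapsTo g D K)
    (hgC : ∀ x ∈ D, (x, g x) ∈ C) (hCg : ∀ x ∈ D, ∀ y ∈ K, (x, y) ∈ C → y = g x) :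
    ContinuousOn g D := by
  intro x hx
  refine hK.tendsto_nhds_of_unique_mapClusterPt (eventually_nhdsWithin_of_forall hgK)
    fun y hy hxy => hCg x hx y hy <| hC.mem_of_mapClusterPt (b := 𝓝[D] x)
      (f := fun x' => (x', g x')) ?_ (eventually_nhdsWithin_of_forall hgC)
  rw [((𝓝 x).basis_sets.prod_nhds (𝓝 y).basis_sets).mapClusterPt_iff_frequently]
  rintro ⟨s, t⟩ ⟨hs, ht⟩
  exact ((mapClusterPt_iff_frequently.1 hxy t ht).and_eventually
    (mem_nhdsWithin_of_mem_nhds hs)).mono fun _ h => ⟨h.2, h.1⟩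

namespace Matrix

variable {X : Type*} [Fintype X] {P : Matrix X X ℝ}

theorem eq_zero_of_vecMul_eq_self_of_apply_eq_zero (hP : ∀ x y, 0 ≤ P x y)
    (hirr : ∀ x y, Relation.ReflTransGen (fun a b => 0 < P a b) x y)
    {w : X → ℝ} (hw0 : 0 ≤ w) (hw : w ᵥ* P = w) {x₀ : X} (hx₀ : w x₀ = 0) : w = 0 := by
  suffices ∀ y, w y = 0 from funext this
  intro y
  induction hirr y x₀ using Relation.ReflTransGen.head_induction_on with
  | refl => exact hx₀
  | @head a c hac _ hc =>
    -- `0 = w c = ∑ x, w x * P x c` is a sum of nonnegative terms, one of them `w a * P a c`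
    have hsum : ∑ x, w x * P x c = 0 := (congrFun hw c).trans hc
    have hterm := (Finset.sum_eq_zero_iff_of_nonneg fun x _ => mul_nonneg (hw0 x) (hP x c)).1
      hsum a (Finset.mem_univ a)
    exact (mul_eq_zero.1 hterm).resolve_right hac.ne'

theorem pos_of_vecMul_eq_self (hP : ∀ x y, 0 ≤ P x y)
    (hirr : ∀ x y, Relation.ReflTransGen (fun a b => 0 < P a b) x y)
    {ν : X → ℝ} (hν0 : 0 ≤ ν) (hν1 : ∑ x, ν x = 1) (hν : ν ᵥ* P = ν) (x : X) : 0 < ν x := by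
  refine (hν0 x).lt_of_ne fun h => ?_
  simp [eq_zero_of_vecMul_eq_self_of_apply_eq_zero hP hirr hν0 hν h.symm] at hν1

theorem eq_of_vecMul_eq_self (hP : ∀ x y, 0 ≤ P x y)
    (hirr : ∀ x y, Relation.ReflTransGen (fun a b => 0 < P a b) x y)
    {μ ν : X → ℝ} (hμ1 : ∑ x, μ x = 1) (hμ : μ ᵥ* P = μ)
    (hν0 : 0 ≤ ν) (hν1 : ∑ x, ν x = 1) (hν : ν ᵥ* P = ν) : μ = ν := by
  have hνpos := pos_of_vecMul_eq_self hP hirr hν0 hν1 hν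
  obtain ⟨x₀, -, hmin⟩ := Finset.exists_min_image Finset.univ (fun x => μ x / ν x)
    (Finset.nonempty_of_sum_ne_zero (hν1.symm ▸ one_ne_zero))
  set c := μ x₀ / ν x₀
  -- `μ - c • ν` is a nonnegative stationary vector vanishing at `x₀`
  have hw0 : 0 ≤ μ - c • ν := fun x => by
    simpa [sub_nonneg, ← le_div_iff₀ (hνpos x)] using hmin x (Finset.mem_univ x)
  have hμc : μ = c • ν := sub_eq_zero.1 <|
    eq_zero_of_vecMul_eq_self_of_apply_eq_zero hP hirr hw0
      (by rw [sub_vecMul, smul_vecMul, hμ, hν]) (x₀ := x₀)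
      (by simp [c, div_mul_cancel₀ _ (hνpos x₀).ne'])
  have hc : c = 1 := by simpa [hμc, ← Finset.mul_sum, hν1] using hμ1
  rw [hμc, hc, one_smul]

end Matrix

namespace OfflineRL

section Shift

variable {S A : Type*} [Fintype S]

theorem le_muXi {ξ : S × A × S → ℝ} (hξ : ∀ z, 0 ≤ ξ z) (s : S) (a : A) (s' : S) :
    ξ (s, a, s') ≤ muXi S A ξ (s, a) :=
  Finset.single_le_sum (f := fun s' => ξ (s, a, s')) (fun _ _ => hξ _) (Finset.mem_univ s')

variable [Fintype A]

theorem sum_muXi (ξ : S × A × S → ℝ) : ∑ x, muXi S A ξ x = ∑ z, ξ z := by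
  simp [muXi, Fintype.sum_prod_type]

theorem muXi_pos {ξ : S × A × S → ℝ} (hξ : ξ ∈ Xi0Set S A) (x : S × A) :
    0 < muXi S A ξ x := by
  obtain ⟨⟨hξ0, hξ1, -⟩, hconn⟩ := hξ
  obtain ⟨⟨s, a, s'⟩, -, hz⟩ := Finset.exists_lt_of_sum_lt (s := Finset.univ) (f := 0) (g := ξ)
    (by simp [hξ1])
  -- every state-action pair has an outgoing edge: follow the path towards `(s, a)`
  rcases (hconn x (s, a)).cases_head with rfl | ⟨y, hxy, -⟩
  · exact hz.trans_le (le_muXi hξ0 s a s')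
  · exact hxy.trans_le (le_muXi hξ0 x.1 x.2 y.1)

theorem QXi_nonneg {ξ : S × A × S → ℝ} (hξ : ξ ∈ Xi0Set S A) (s : S) (a : A) (s' : S) :
    0 ≤ QXi S A ξ s a s' :=
  div_nonneg (hξ.1.1 _) (muXi_pos hξ (s, a)).le

theorem sum_QXi {ξ : S × A × S → ℝ} (hξ : ξ ∈ Xi0Set S A) (s : S) (a : A) :
    ∑ s', QXi S A ξ s a s' = 1 := by
  simp only [QXi, ← Finset.sum_div]
  exact div_self (muXi_pos hξ (s, a)).ne'

theorem isClosed_XiSet : IsClosed (XiSet S A) := by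
  simp only [XiSet, Set.ofPred_and, Set.ofPred_forall]
  exact (isClosed_iInter fun z => isClosed_le continuous_const (continuous_apply z)).inter
    ((isClosed_eq (by fun_prop) continuous_const).inter
      (isClosed_iInter fun s => isClosed_eq (by fun_prop) (by fun_prop)))

theorem isCompact_XiSet : IsCompact (XiSet S A) := by
  refine (isCompact_univ_pi fun _ => isCompact_Icc (a := (0 : ℝ)) (b := 1)).of_isClosed_subset
    isClosed_XiSet fun ξ hξ z _ => ⟨hξ.1 z, ?_⟩
  exact hξ.2.1 ▸ Finset.single_le_sum (fun w _ => hξ.1 w) (Finset.mem_univ z)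

noncomputable def shiftMatrix (π : S → A → ℝ) (ξ0 : S × A × S → ℝ) : Matrix (S × A) (S × A) ℝ :=
  Matrix.of fun x x' => π x'.1 x'.2 * QXi S A ξ0 x.1 x.2 x'.1

theorem shiftMatrix_nonneg {π : S → A → ℝ} {ξ0 : S × A × S → ℝ} (hπ : π ∈ policySet S A)
    (hξ0 : ξ0 ∈ Xi0Set S A) (x x' : S × A) : 0 ≤ shiftMatrix π ξ0 x x' :=
  mul_nonneg ((hπ x'.1).1 x'.2) (QXi_nonneg hξ0 _ _ _)

theorem shiftMatrix_irreducible {π : S → A → ℝ} {ξ0 : S × A × S → ℝ} (hπ : π ∈ policyPos S A)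
    (hξ0 : ξ0 ∈ Xi0Set S A) (x y : S × A) :
    Relation.ReflTransGen (fun u v => 0 < shiftMatrix π ξ0 u v) x y :=
  Relation.ReflTransGen.mono (fun u v huv => mul_pos (hπ.2 v.1 v.2) (div_pos huv (muXi_pos hξ0 u)))
    x y (hξ0.2 x y)

theorem IsShift.unique {π : S → A → ℝ} {ξ0 ξ ξ' : S × A × S → ℝ} (hπ : π ∈ policyPos S A)
    (hξ0 : ξ0 ∈ Xi0Set S A) (h : IsShift S A π ξ0 ξ) (h' : IsShift S A π ξ0 ξ') : ξ = ξ' := by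
  obtain ⟨μ, -, hμ1, hμ, hξ⟩ := h
  obtain ⟨ν, hν0, hν1, hν, hξ'⟩ := h'
  have hμν : μ = ν :=
    Matrix.eq_of_vecMul_eq_self (shiftMatrix_nonneg hπ.1 hξ0) (shiftMatrix_irreducible hπ hξ0)
      hμ1 (funext fun x => (hμ x).symm) hν0 hν1 (funext fun x => (hν x).symm)
  ext ⟨s, a, s'⟩
  rw [hξ, hξ', hμν]

/-- `IsShift` with the witness eliminated and denominators cleared: a closed condition. -/
def ShiftEqns (π : S → A → ℝ) (ξ0 ξ : S × A × S → ℝ) : Prop :=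
  (∀ s a s', ξ (s, a, s') * muXi S A ξ0 (s, a) = ξ0 (s, a, s') * muXi S A ξ (s, a)) ∧
    ∀ s' a', muXi S A ξ (s', a') = π s' a' * ∑ x : S × A, ξ (x.1, x.2, s')

theorem isClosed_shiftEqns :
    IsClosed {p : ((S → A → ℝ) × (S × A × S → ℝ)) × (S × A × S → ℝ) |
      ShiftEqns p.1.1 p.1.2 p.2} := by
  simp only [ShiftEqns, muXi, Set.ofPred_and, Set.ofPred_forall]
  exact (isClosed_iInter fun s => isClosed_iInter fun a => isClosed_iInter fun s' =>
    isClosed_eq (by fun_prop) (by fun_prop)).inter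
      (isClosed_iInter fun s' => isClosed_iInter fun a' => isClosed_eq (by fun_prop) (by fun_prop))

theorem isShift_iff_shiftEqns {π : S → A → ℝ} {ξ0 ξ : S × A × S → ℝ} (hξ0 : ξ0 ∈ Xi0Set S A)
    (hξ : ξ ∈ XiSet S A) : IsShift S A π ξ0 ξ ↔ ShiftEqns π ξ0 ξ := by
  constructor
  · rintro ⟨μ, -, -, hμ, hξμ⟩
    obtain rfl : muXi S A ξ = μ := funext fun x => by
      simp only [muXi, hξμ, ← Finset.sum_mul, sum_QXi hξ0, one_mul]
    refine ⟨fun s a s' => ?_, fun s' a' => ?_⟩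
    · rw [hξμ, QXi, div_mul_eq_mul_div, div_mul_cancel₀ _ (muXi_pos hξ0 (s, a)).ne']
    · rw [hμ, Finset.mul_sum]
      exact Finset.sum_congr rfl fun x _ => by rw [hξμ]; ring
  · rintro ⟨hker, hst⟩
    have hξQ : ∀ s a s', ξ (s, a, s') = QXi S A ξ0 s a s' * muXi S A ξ (s, a) := fun s a s' => by
      rw [QXi, div_mul_eq_mul_div, eq_div_iff (muXi_pos hξ0 (s, a)).ne', hker]
    refine ⟨muXi S A ξ, fun x => Finset.sum_nonneg fun _ _ => hξ.1 _,
      (sum_muXi ξ).trans hξ.2.1, fun x' => ?_, hξQ⟩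
    rw [hst, Finset.mul_sum]
    exact Finset.sum_congr rfl fun x _ => by rw [hξQ]; ring

end Shift

variable (S A : Type*) [Fintype S] [Fintype A] [DecidableEq S] [DecidableEq A]

/-- **Joint continuity of `(π, ξ0) ↦ f_π(ξ0)`** (Corollary 3).
Any function `f` that maps each `(π, ξ0) ∈ Π₀ × Ξ₀` to the stationary
state-action-next-state distribution of the Markov chain induced by `(π, Q(ξ0))`
is jointly continuous on `Π₀ × Ξ₀`. -/
theorem distribution_shift_jointly_continuous
    (f : (S → A → ℝ) → (S × A × S → ℝ) → (S × A × S → ℝ))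
    (hf : ∀ π ∈ policyPos S A, ∀ ξ0 ∈ Xi0Set S A,
      f π ξ0 ∈ Xi0Set S A ∧ IsShift S A π ξ0 (f π ξ0)) :
    ContinuousOn (fun q : (S → A → ℝ) × (S × A × S → ℝ) => f q.1 q.2)
      (policyPos S A ×ˢ Xi0Set S A) := by
  refine continuousOn_of_isCompact_of_isClosed_graph isCompact_XiSet isClosed_shiftEqns
    (fun q hq => (hf q.1 hq.1 q.2 hq.2).1.1) (fun q hq => ?_) fun q hq ξ hξ hξq => ?_
  · obtain ⟨hfq, hshift⟩ := hf q.1 hq.1 q.2 hq.2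
    exact (isShift_iff_shiftEqns hq.2 hfq.1).1 hshift
  · exact ((isShift_iff_shiftEqns hq.2 hξ).2 hξq).unique hq.1 hq.2 (hf q.1 hq.1 q.2 hq.2).2

end OfflineRL
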